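/- arXiv:1403.7535 — 4 statements merged into one kernel-verified Lean document; each statement's English description precedes it below -/
import Mathlib

section
/- Let f : ℝ → ℝ, let a > 0, let f̂(x) = a·f(x/a²), let h ≤ m ≤ h' be real numbers and let b > 0. Then the (ab)-neighborhood of a²m with respect to f̂ relative to the interval [a²h, a²h'] equals a² times the b-neighborhood of m with respect to f relative to [h, h']; that is, 𝔩_{f̂}(a²m, ab) = a²·𝔩_f(m, b) and 𝔯_{f̂}(a²m, ab) = a²·𝔯_f(m, b). -/
open Real Set Pointwise

/-- `𝔩_f(m,c)` relative to the interval `[h, h']`: the infimum of the set of points of `[h, m]`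
where `f` is less than `c` above `f m`. -/
noncomputable def neighL (f : ℝ → ℝ) (h m c : ℝ) : ℝ :=
  sInf {x | x ∈ Set.Icc h m ∧ f x - f m < c}

/-- `𝔯_f(m,c)` relative to the interval `[h, h']`: the supremum of the set of points of `[m, h']`
where `f` is less than `c` above `f m`. -/
noncomputable def neighR (f : ℝ → ℝ) (m h' c : ℝ) : ℝ :=
  sSup {x | x ∈ Set.Icc m h' ∧ f x - f m < c}

/-- The rescaled function `f̂(x) = a f(x/a²)`. -/
noncomputable def rescale (f : ℝ → ℝ) (a : ℝ) : ℝ → ℝ := fun x => a * f (x / a ^ 2)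

theorem smul_setOf_mem_Icc_and {K : Type*} [Field K] [LinearOrder K] [IsStrictOrderedRing K]
    {c : K} (hc : 0 < c) (u v : K) (P : K → Prop) :
    c • {y | y ∈ Icc u v ∧ P (c * y)} = {x | x ∈ Icc (c * u) (c * v) ∧ P x} := by
  ext x
  constructor
  · rintro ⟨y, ⟨hy, hP⟩, rfl⟩
    exact ⟨LinearOrderedField.smul_Icc hc ▸ smul_mem_smul_set hy, hP⟩
  · rintro ⟨hx, hP⟩
    rw [← LinearOrderedField.smul_Icc hc] at hx
    obtain ⟨y, hy, rfl⟩ := hx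
    exact ⟨y, ⟨hy, hP⟩, rfl⟩

theorem rescale_mul_sq_sub (f : ℝ → ℝ) {a : ℝ} (ha : a ≠ 0) (x y : ℝ) :
    rescale f a (a ^ 2 * x) - rescale f a (a ^ 2 * y) = a * (f x - f y) := by
  simp only [rescale, mul_div_cancel_left₀ _ (pow_ne_zero 2 ha)]
  ring

theorem setOf_rescale_sub_lt (f : ℝ → ℝ) {a : ℝ} (ha : 0 < a) (u v m b : ℝ) :
    {x | x ∈ Icc (a ^ 2 * u) (a ^ 2 * v) ∧ rescale f a x - rescale f a (a ^ 2 * m) < a * b} =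
      a ^ 2 • {x | x ∈ Icc u v ∧ f x - f m < b} := by
  rw [← smul_setOf_mem_Icc_and (by positivity)]
  simp only [rescale_mul_sq_sub f ha.ne', mul_lt_mul_iff_right₀ ha]

theorem neighborhood_rescale_general (f : ℝ → ℝ) (a b h m h' : ℝ) (ha : 0 < a) :
    neighL (rescale f a) (a ^ 2 * h) (a ^ 2 * m) (a * b) = a ^ 2 * neighL f h m b ∧
    neighR (rescale f a) (a ^ 2 * m) (a ^ 2 * h') (a * b) = a ^ 2 * neighR f m h' b := by
  have ha2 : 0 ≤ a ^ 2 := sq_nonneg a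
  constructor
  · rw [neighL, setOf_rescale_sub_lt f ha, Real.sInf_smul_of_nonneg ha2, smul_eq_mul, neighL]
  · rw [neighR, setOf_rescale_sub_lt f ha, Real.sSup_smul_of_nonneg ha2, smul_eq_mul, neighR]

/-- Scaling of neighborhoods of well bottoms: the `(ab)`-neighborhood of `a² m` for `f̂`
relative to `[a²h, a²h']` is `a²` times the `b`-neighborhood of `m` for `f` relative
to `[h, h']`. -/
theorem neighborhood_rescale (f : ℝ → ℝ) (a b h m h' : ℝ) (ha : 0 < a) (hb : 0 < b)
    (hhm : h ≤ m) (hmh' : m ≤ h') :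
    neighL (rescale f a) (a ^ 2 * h) (a ^ 2 * m) (a * b) = a ^ 2 * neighL f h m b ∧
    neighR (rescale f a) (a ^ 2 * m) (a ^ 2 * h') (a * b) = a ^ 2 * neighR f m h' b :=
  neighborhood_rescale_general f a b h m h' ha
end

section
/- Let f : ℝ → ℝ, let a > 0, let t > 1 and let f̂(x) = a·f(x/a²). Then a point h ∈ ℝ is a t-peak of f if and only if a²h is a (t^a)-peak of f̂. -/
open Real Set

/-- The set of points weakly to the left of `m` where `f` rises at least `log t` above `f m`. -/
def leftRiseSet (f : ℝ → ℝ) (t m : ℝ) : Set ℝ := {x | x ≤ m ∧ f m + Real.log t ≤ f x}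

/-- The set of points weakly to the right of `m` where `f` rises at least `log t` above `f m`. -/
def rightRiseSet (f : ℝ → ℝ) (t m : ℝ) : Set ℝ := {x | m ≤ x ∧ f m + Real.log t ≤ f x}

/-- `m` is a `t`-stable point of `f`. -/
def IsStablePoint (f : ℝ → ℝ) (t m : ℝ) : Prop :=
  (leftRiseSet f t m).Nonempty ∧ (rightRiseSet f t m).Nonempty ∧
    ∀ x ∈ Set.Icc (sSup (leftRiseSet f t m)) (sInf (rightRiseSet f t m)), f m ≤ f x

/-- `h` is a `t`-peak of `f`: it maximizes `f` between two `t`-stable points. -/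
def IsPeak (f : ℝ → ℝ) (t h : ℝ) : Prop :=
  ∃ m m' : ℝ, IsStablePoint f t m ∧ IsStablePoint f t m' ∧ m < m' ∧
    h ∈ Set.Icc m m' ∧ ∀ x ∈ Set.Icc m m', f x ≤ f h

lemma csSup_mul_image (c : ℝ) (hc : 0 < c) (S : Set ℝ) (hne : S.Nonempty)
    (hbdd : BddAbove S) : sSup ((fun x => c * x) '' S) = c * sSup S := by
  have h := isLUB_csSup hne hbdd
  have hl : IsLUB ((fun x => c * x) '' S) (c * sSup S) := by
    constructor
    · rintro _ ⟨y, hy, rfl⟩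
      exact mul_le_mul_of_nonneg_left (h.1 hy) hc.le
    · intro b hb
      have hb' : sSup S ≤ b / c := by
        refine h.2 fun y hy => ?_
        rw [le_div_iff₀ hc]
        simpa [mul_comm] using hb ⟨y, hy, rfl⟩
      calc c * sSup S ≤ c * (b / c) := mul_le_mul_of_nonneg_left hb' hc.le
        _ = b := by field_simp
  exact hl.csSup_eq (hne.image _)

lemma csInf_mul_image (c : ℝ) (hc : 0 < c) (S : Set ℝ) (hne : S.Nonempty)
    (hbdd : BddBelow S) : sInf ((fun x => c * x) '' S) = c * sInf S := by
  have h := isGLB_csInf hne hbdd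
  have hl : IsGLB ((fun x => c * x) '' S) (c * sInf S) := by
    constructor
    · rintro _ ⟨y, hy, rfl⟩
      exact mul_le_mul_of_nonneg_left (h.1 hy) hc.le
    · intro b hb
      have hb' : b / c ≤ sInf S := by
        refine h.2 fun y hy => ?_
        rw [div_le_iff₀ hc]
        simpa [mul_comm] using hb ⟨y, hy, rfl⟩
      calc b = c * (b / c) := by field_simp
        _ ≤ c * sInf S := mul_le_mul_of_nonneg_left hb' hc.le
  exact hl.csInf_eq (hne.image _)

lemma leftRiseSet_rescale (f : ℝ → ℝ) (a t m : ℝ) (ha : 0 < a) (ht : 0 < t) :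
    leftRiseSet (rescale f a) (t ^ a) (a ^ 2 * m) = (fun x => a ^ 2 * x) '' leftRiseSet f t m := by
  have ha2 : (0:ℝ) < a ^ 2 := by positivity
  ext x
  constructor
  · rintro ⟨hx1, hx2⟩
    refine ⟨x / a ^ 2, ⟨?_, ?_⟩, by field_simp⟩
    · rw [div_le_iff₀ ha2]; linarith [hx1]
    · rw [rescale, rescale, Real.log_rpow ht, mul_comm (a^2) m,
        mul_div_cancel_right₀ m (ne_of_gt ha2)] at hx2
      have := hx2
      nlinarith [this]
  · rintro ⟨y, ⟨hy1, hy2⟩, rfl⟩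
    refine ⟨mul_le_mul_of_nonneg_left hy1 ha2.le, ?_⟩
    rw [rescale, Real.log_rpow ht]
    simp only [rescale]
    rw [mul_comm (a^2) m, mul_div_cancel_right₀ m (ne_of_gt ha2),
      mul_comm (a^2) y, mul_div_cancel_right₀ y (ne_of_gt ha2)]
    nlinarith

lemma rightRiseSet_rescale (f : ℝ → ℝ) (a t m : ℝ) (ha : 0 < a) (ht : 0 < t) :
    rightRiseSet (rescale f a) (t ^ a) (a ^ 2 * m) = (fun x => a ^ 2 * x) '' rightRiseSet f t m := by
  have ha2 : (0:ℝ) < a ^ 2 := by positivity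
  ext x
  constructor
  · rintro ⟨hx1, hx2⟩
    refine ⟨x / a ^ 2, ⟨?_, ?_⟩, by field_simp⟩
    · rw [le_div_iff₀ ha2]; linarith [hx1]
    · rw [rescale, rescale, Real.log_rpow ht, mul_comm (a^2) m,
        mul_div_cancel_right₀ m (ne_of_gt ha2)] at hx2
      nlinarith [hx2]
  · rintro ⟨y, ⟨hy1, hy2⟩, rfl⟩
    refine ⟨mul_le_mul_of_nonneg_left hy1 ha2.le, ?_⟩
    rw [rescale, Real.log_rpow ht]
    simp only [rescale]
    rw [mul_comm (a^2) m, mul_div_cancel_right₀ m (ne_of_gt ha2),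
      mul_comm (a^2) y, mul_div_cancel_right₀ y (ne_of_gt ha2)]
    nlinarith

lemma stable_rescale (f : ℝ → ℝ) (a t m : ℝ) (ha : 0 < a) (ht : 0 < t)
    (hm : IsStablePoint f t m) : IsStablePoint (rescale f a) (t ^ a) (a ^ 2 * m) := by
  have ha2 : (0:ℝ) < a ^ 2 := by positivity
  obtain ⟨hL, hR, hmid⟩ := hm
  have hLb : BddAbove (leftRiseSet f t m) := ⟨m, fun x hx => hx.1⟩
  have hRb : BddBelow (rightRiseSet f t m) := ⟨m, fun x hx => hx.1⟩
  rw [IsStablePoint, leftRiseSet_rescale f a t m ha ht, rightRiseSet_rescale f a t m ha ht,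
    csSup_mul_image _ ha2 _ hL hLb, csInf_mul_image _ ha2 _ hR hRb]
  refine ⟨hL.image _, hR.image _, ?_⟩
  rintro x ⟨hx1, hx2⟩
  have hmem : x / a ^ 2 ∈ Set.Icc (sSup (leftRiseSet f t m)) (sInf (rightRiseSet f t m)) := by
    constructor
    · rw [le_div_iff₀ ha2]; linarith
    · rw [div_le_iff₀ ha2]; linarith
  have := hmid _ hmem
  simp only [rescale]
  rw [mul_comm (a^2) m, mul_div_cancel_right₀ m (ne_of_gt ha2)]
  nlinarith

lemma peak_rescale_mp (f : ℝ → ℝ) (a t h : ℝ) (ha : 0 < a) (ht : 1 < t)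
    (hp : IsPeak f t h) : IsPeak (rescale f a) (t ^ a) (a ^ 2 * h) := by
  have ha2 : (0:ℝ) < a ^ 2 := by positivity
  have ht0 : (0:ℝ) < t := lt_trans one_pos ht
  obtain ⟨m, m', hm, hm', hlt, ⟨hh1, hh2⟩, hmax⟩ := hp
  refine ⟨a ^ 2 * m, a ^ 2 * m', stable_rescale f a t m ha ht0 hm,
    stable_rescale f a t m' ha ht0 hm', by nlinarith, ⟨by nlinarith, by nlinarith⟩, ?_⟩
  rintro x ⟨hx1, hx2⟩
  have hmem : x / a ^ 2 ∈ Set.Icc m m' := by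
    constructor
    · rw [le_div_iff₀ ha2]; linarith
    · rw [div_le_iff₀ ha2]; linarith
  have := hmax _ hmem
  simp only [rescale]
  rw [mul_comm (a^2) h, mul_div_cancel_right₀ h (ne_of_gt ha2)]
  nlinarith

/-- Brownian-type scaling of peaks: `h` is a `t`-peak of `f` iff `a² h` is a `t^a`-peak
of the rescaled function `f̂`. -/
theorem peak_rescale (f : ℝ → ℝ) (a t h : ℝ) (ha : 0 < a) (ht : 1 < t) :
    IsPeak f t h ↔ IsPeak (rescale f a) (t ^ a) (a ^ 2 * h) := by
  have ht0 : (0:ℝ) < t := lt_trans one_pos ht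
  constructor
  · exact peak_rescale_mp f a t h ha ht
  · intro hp
    have ha' : (0:ℝ) < a⁻¹ := inv_pos.mpr ha
    have hta : 1 < t ^ a := Real.one_lt_rpow_iff_of_pos ht0 |>.mpr (Or.inl ⟨ht, ha⟩)
    have := peak_rescale_mp (rescale f a) a⁻¹ (t ^ a) (a ^ 2 * h) ha' hta hp
    have hfun : rescale (rescale f a) a⁻¹ = f := by
      funext x
      simp only [rescale]
      have hx : x / (a ^ 2 : ℝ)⁻¹ / a ^ 2 = x := by
        field_simp
      rw [inv_pow, hx]
      field_simp
    have hpow : (t ^ a) ^ (a⁻¹ : ℝ) = t := by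
      rw [← Real.rpow_mul ht0.le, mul_inv_cancel₀ (ne_of_gt ha), Real.rpow_one]
    have harg : (a⁻¹) ^ 2 * (a ^ 2 * h) = h := by
      field_simp
    rw [hfun, hpow, harg] at this
    exact this
end

section
/- Let f : ℝ → ℝ be continuous and let I ⊆ J be nonempty compact intervals. Then the elevation of f on I is at most the elevation of f on J, i.e. ℰ_f(I) ≤ ℰ_f(J). -/
open Real Set

/-- The elevation `ℰ_f([a,b])` of `f` on the compact interval `[a, b]`:
`max_{x,y ∈ [a,b]} max_{z ∈ [min(x,y), max(x,y)]} (f z - f x - f y) + min_{v ∈ [a,b]} f v`. -/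
noncomputable def elevation (f : ℝ → ℝ) (a b : ℝ) : ℝ :=
  sSup {v | ∃ x ∈ Set.Icc a b, ∃ y ∈ Set.Icc a b,
      ∃ z ∈ Set.Icc (min x y) (max x y), v = f z - f x - f y} +
    sInf (f '' Set.Icc a b)

/-- Monotonicity of the elevation: if `[a, b] ⊆ [c, d]` are nonempty compact intervals and
`f` is continuous, then `ℰ_f([a,b]) ≤ ℰ_f([c,d])`. -/
theorem elevation_mono (f : ℝ → ℝ) (hf : Continuous f) (a b c d : ℝ)
    (hab : a ≤ b) (hcd : c ≤ d) (hsub : Set.Icc a b ⊆ Set.Icc c d) :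
    elevation f a b ≤ elevation f c d := by
  have hJne : (Icc c d).Nonempty := ⟨c, le_refl c, hcd⟩
  obtain ⟨lo, hloJ, hlomin⟩ := isCompact_Icc.exists_isMinOn hJne hf.continuousOn
  obtain ⟨hi, hhiJ, hhimax⟩ := isCompact_Icc.exists_isMaxOn hJne hf.continuousOn
  have hlomin' : ∀ w ∈ Icc c d, f lo ≤ f w := fun w hw => hlomin hw
  have hhimax' : ∀ w ∈ Icc c d, f w ≤ f hi := fun w hw => hhimax hw
  set SI := {v | ∃ x ∈ Set.Icc a b, ∃ y ∈ Set.Icc a b,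
      ∃ z ∈ Set.Icc (min x y) (max x y), v = f z - f x - f y} with hSI
  set SJ := {v | ∃ x ∈ Set.Icc c d, ∃ y ∈ Set.Icc c d,
      ∃ z ∈ Set.Icc (min x y) (max x y), v = f z - f x - f y} with hSJ
  have hzJ : ∀ x ∈ Icc c d, ∀ y ∈ Icc c d, ∀ z ∈ Icc (min x y) (max x y), z ∈ Icc c d := by
    rintro x ⟨hx1, hx2⟩ y ⟨hy1, hy2⟩ z ⟨hz1, hz2⟩
    exact ⟨le_trans (le_min hx1 hy1) hz1, le_trans hz2 (max_le hx2 hy2)⟩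
  have hbddJ : BddAbove SJ := by
    refine ⟨f hi - f lo - f lo, ?_⟩
    rintro v ⟨x, hx, y, hy, z, hz, rfl⟩
    have hzc := hzJ x hx y hy z hz
    have h0 := hhimax' z hzc
    have h1 := hlomin' x hx
    have h2 := hlomin' y hy
    linarith
  have hSIne : SI.Nonempty :=
    ⟨-f a, a, ⟨le_refl a, hab⟩, a, ⟨le_refl a, hab⟩, a, by simp, by ring⟩
  have hInfJ : sInf (f '' Icc c d) = f lo :=
    IsLeast.csInf_eq ⟨⟨lo, hloJ, rfl⟩, by rintro w ⟨u, hu, rfl⟩; exact hlomin' u hu⟩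
  have hbddI : BddBelow (f '' Icc a b) :=
    ⟨f lo, by rintro w ⟨u, hu, rfl⟩; exact hlomin' u (hsub hu)⟩
  set mI := sInf (f '' Icc a b) with hmI
  have hmIle : ∀ x ∈ Icc a b, mI ≤ f x := fun x hx => csInf_le hbddI ⟨x, hx, rfl⟩
  have key : ∀ u ∈ SI, u ≤ sSup SJ + (f lo - mI) := by
    rintro u ⟨x, hx, y, hy, z, hz, rfl⟩
    have hxJ := hsub hx
    have hyJ := hsub hy
    obtain ⟨hz1, hz2⟩ := hz
    rcases le_or_gt a lo with hal | hal
    · rcases le_or_gt lo b with hlb | hlb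
      · -- lo ∈ [a,b]
        have hm : mI ≤ f lo := hmIle lo ⟨hal, hlb⟩
        have hmem : f z - f x - f y ∈ SJ := ⟨x, hxJ, y, hyJ, z, ⟨hz1, hz2⟩, rfl⟩
        have := le_csSup hbddJ hmem
        linarith
      · -- b < lo
        have hxlo : x ≤ lo := le_trans hx.2 hlb.le
        have hylo : y ≤ lo := le_trans hy.2 hlb.le
        rcases le_total x y with hxy | hyx
        · rw [min_eq_left hxy] at hz1
          rw [max_eq_right hxy] at hz2
          have hmem : f z - f x - f lo ∈ SJ := by
            refine ⟨x, hxJ, lo, hloJ, z, ?_, rfl⟩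
            rw [min_eq_left hxlo, max_eq_right hxlo]
            exact ⟨hz1, le_trans hz2 hylo⟩
          have := le_csSup hbddJ hmem
          have := hmIle y hy
          linarith
        · rw [min_eq_right hyx] at hz1
          rw [max_eq_left hyx] at hz2
          have hmem : f z - f y - f lo ∈ SJ := by
            refine ⟨y, hyJ, lo, hloJ, z, ?_, rfl⟩
            rw [min_eq_left hylo, max_eq_right hylo]
            exact ⟨hz1, le_trans hz2 hxlo⟩
          have := le_csSup hbddJ hmem
          have := hmIle x hx
          linarith
    · -- lo < a
      have hlox : lo ≤ x := le_trans hal.le hx.1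
      have hloy : lo ≤ y := le_trans hal.le hy.1
      rcases le_total x y with hxy | hyx
      · rw [min_eq_left hxy] at hz1
        rw [max_eq_right hxy] at hz2
        have hmem : f z - f lo - f y ∈ SJ := by
          refine ⟨lo, hloJ, y, hyJ, z, ?_, rfl⟩
          rw [min_eq_left hloy, max_eq_right hloy]
          exact ⟨le_trans hlox hz1, hz2⟩
        have := le_csSup hbddJ hmem
        have := hmIle x hx
        linarith
      · rw [min_eq_right hyx] at hz1
        rw [max_eq_left hyx] at hz2
        have hmem : f z - f lo - f x ∈ SJ := by
          refine ⟨lo, hloJ, x, hxJ, z, ?_, rfl⟩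
          rw [min_eq_left hlox, max_eq_right hlox]
          exact ⟨le_trans hloy hz1, hz2⟩
        have := le_csSup hbddJ hmem
        have := hmIle y hy
        linarith
  have hsup : sSup SI ≤ sSup SJ + (f lo - mI) := csSup_le hSIne key
  show sSup SI + mI ≤ sSup SJ + sInf (f '' Set.Icc c d)
  rw [hInfJ]
  linarith
end

section
/- Let ω be an environment, fix a ∈ ℤ and let f : ℤ → ℝ be defined by f(x) = Σ_{i=a}^{x−1} e^{V(i)−V(a)} for x ≥ a (with f(a) = 0) and f(x) = −Σ_{i=x}^{a−1} e^{V(i)−V(a)} for x < a, where V is the potential of ω. Let (Ω, ℱ, (ℱ_n)_{n∈ℕ}, ℙ) be a filtered probability space and (ξ_n)_{n∈ℕ} an adapted ℤ-valued process with ξ_0 = z constant for some z ∈ ℤ, such that almost surely for every n, 𝔼[1_{{ξ_{n+1} = ξ_n + 1}} | ℱ_n] = ω⁺_{ξ_n}/(ω⁺_{ξ_n} + ω⁻_{ξ_n}) and 𝔼[1_{{ξ_{n+1} = ξ_n − 1}} | ℱ_n] = ω⁻_{ξ_n}/(ω⁺_{ξ_n} + ω⁻_{ξ_n}). Then the process (f(ξ_n))_{n∈ℕ}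 is a martingale with respect to (ℱ_n) and ℙ. -/
/-!
With `p(x) = ω⁺_x/(ω⁺_x+ω⁻_x)` and `q(x) = ω⁻_x/(ω⁺_x+ω⁻_x)`, `f(ξ_n)` is a martingale as soon
as `f` is harmonic: `p(x) f(x+1) + q(x) f(x-1) = f(x)`. Since `f(x+1) - f(x) = e^{V(x)-V(a)}` and
`e^{V(x)-V(x-1)} = ω⁻_x/ω⁺_x`, indeed `p(x) (f(x+1) - f(x)) = q(x) (f(x) - f(x-1))`.
Integrability comes from `p + q = 1`: the walk moves by `±1` almost surely, so `|ξ_n - z| ≤ n`.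
-/

open Real MeasureTheory ProbabilityTheory

/-- The potential `V` of the environment. -/
noncomputable def potential (ωm ωp : ℤ → ℝ) : ℤ → ℝ := fun x =>
  if 0 ≤ x then ∑ i ∈ Finset.range x.toNat, Real.log (ωm ((i : ℤ) + 1) / ωp ((i : ℤ) + 1))
  else ∑ i ∈ Finset.range (-x).toNat, Real.log (ωp (x + 1 + (i : ℤ)) / ωm (x + 1 + (i : ℤ)))

/-- The Lyapunov function `f` associated to the potential `V` with base point `a`:
`f x = ∑_{i=a}^{x-1} e^{V(i) - V(a)}` for `x ≥ a` and `f x = -∑_{i=x}^{a-1} e^{V(i) - V(a)}`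
for `x < a`. -/
noncomputable def lyap (V : ℤ → ℝ) (a : ℤ) : ℤ → ℝ := fun x =>
  if a ≤ x then ∑ i ∈ Finset.range (x - a).toNat, Real.exp (V (a + (i : ℤ)) - V a)
  else -∑ i ∈ Finset.range (a - x).toNat, Real.exp (V (x + (i : ℤ)) - V a)

lemma potential_of_nonpos (ωm ωp : ℤ → ℝ) {x : ℤ} (hx : x ≤ 0) :
    potential ωm ωp x
      = ∑ i ∈ Finset.range (-x).toNat, Real.log (ωp (x + 1 + (i : ℤ)) / ωm (x + 1 + (i : ℤ))) := by
  rcases hx.eq_or_lt with rfl | hx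
  · simp [potential]
  · simp [potential, not_le.mpr hx]

lemma potential_eq_potential_sub_one_add (ωm ωp : ℤ → ℝ) (x : ℤ) :
    potential ωm ωp x = potential ωm ωp (x - 1) + Real.log (ωm x / ωp x) := by
  rcases le_or_gt 1 x with hx | hx
  · obtain ⟨k, rfl⟩ : ∃ k : ℕ, x = k + 1 := ⟨(x - 1).toNat, by omega⟩
    rw [potential, potential, if_pos (by omega), if_pos (by omega), add_sub_cancel_right]
    simp [Finset.sum_range_succ]
  · obtain ⟨k, rfl⟩ : ∃ k : ℕ, x = -k := ⟨(-x).toNat, by omega⟩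
    have hshift (i : ℕ) : -(k : ℤ) + ((i + 1 : ℕ) : ℤ) = -k + 1 + i := by push_cast; ring
    rw [potential_of_nonpos _ _ (by omega), potential_of_nonpos _ _ (by omega),
      show (-(-(k : ℤ) - 1)).toNat = k + 1 by omega, Finset.sum_range_succ', neg_neg,
      Int.toNat_natCast, ← inv_div (ωp _), Real.log_inv]
    simp only [sub_add_cancel, hshift, Nat.cast_zero, add_zero]
    ring

lemma exp_potential_sub_potential_sub_one (ωm ωp : ℤ → ℝ) {x : ℤ} (hm : 0 < ωm x)
    (hp : 0 < ωp x) :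
    Real.exp (potential ωm ωp x - potential ωm ωp (x - 1)) = ωm x / ωp x := by
  rw [potential_eq_potential_sub_one_add ωm ωp x, add_sub_cancel_left,
    Real.exp_log (div_pos hm hp)]

lemma lyap_add_one (V : ℤ → ℝ) (a x : ℤ) :
    lyap V a (x + 1) = lyap V a x + Real.exp (V x - V a) := by
  rcases le_or_gt a x with hx | hx
  · obtain ⟨k, rfl⟩ : ∃ k : ℕ, x = a + k := ⟨(x - a).toNat, by omega⟩
    rw [lyap, lyap, if_pos (by omega : a ≤ a + k + 1), if_pos hx,
      show (a + k + 1 - a).toNat = k + 1 by omega, show (a + k - a).toNat = k by omega,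
      Finset.sum_range_succ]
  rcases (Int.add_one_le_of_lt hx).eq_or_lt with rfl | hx'
  · simp [lyap]
  obtain ⟨k, rfl⟩ : ∃ k : ℕ, x = a - (k + 2) := ⟨(a - x - 2).toNat, by omega⟩
  have hshift (i : ℕ) : a - (k + 2) + ((i + 1 : ℕ) : ℤ) = a - (k + 2) + 1 + i := by
    push_cast; ring
  rw [lyap, lyap, if_neg (by omega : ¬ a ≤ a - (k + 2) + 1), if_neg (by omega),
    show (a - (a - (k + 2) + 1)).toNat = k + 1 by omega,
    show (a - (a - (k + 2))).toNat = k + 1 + 1 by omega, Finset.sum_range_succ' _ (k + 1)]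
  simp only [hshift, Nat.cast_zero, add_zero]
  ring

lemma lyap_potential_harmonic (ωm ωp : ℤ → ℝ) (hm : ∀ x, 0 < ωm x) (hp : ∀ x, 0 < ωp x)
    (a x : ℤ) :
    ωp x / (ωp x + ωm x) * lyap (potential ωm ωp) a (x + 1)
      + ωm x / (ωp x + ωm x) * lyap (potential ωm ωp) a (x - 1)
      = lyap (potential ωm ωp) a x := by
  have hincr : Real.exp (potential ωm ωp x - potential ωm ωp a)
      = Real.exp (potential ωm ωp (x - 1) - potential ωm ωp a) * (ωm x / ωp x) := by
    rw [← exp_potential_sub_potential_sub_one ωm ωp (hm x) (hp x), ← Real.exp_add]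
    ring_nf
  have hprev := lyap_add_one (potential ωm ωp) a (x - 1)
  rw [sub_add_cancel] at hprev
  rw [lyap_add_one, hincr, hprev]
  field_simp [(hp x).ne', (add_pos (hp x) (hm x)).ne']
  ring

lemma ae_mem_union_of_measureReal_add_eq_one {Ω : Type*} {m0 : MeasurableSpace Ω}
    {μ : Measure Ω} [IsProbabilityMeasure μ] {A B : Set Ω} (hA : MeasurableSet A)
    (hB : MeasurableSet B) (hAB : Disjoint A B) (h : μ.real A + μ.real B = 1) :
    ∀ᵐ ω ∂μ, ω ∈ A ∪ B := by
  have hcompl : μ.real (A ∪ B)ᶜ = 0 := by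
    rw [probReal_compl_eq_one_sub (hA.union hB), measureReal_union hAB hB, h, sub_self]
  rw [measureReal_eq_zero_iff] at hcompl
  exact mem_ae_iff.mpr hcompl

lemma measureReal_eq_integral_of_condExp_indicator {Ω : Type*} {m m0 : MeasurableSpace Ω}
    {μ : Measure Ω} [IsFiniteMeasure μ] (hm : m ≤ m0) {A : Set Ω} (hA : MeasurableSet A)
    {Y : Ω → ℝ} (hY : μ[A.indicator fun _ => 1 | m] =ᵐ[μ] Y) :
    μ.real A = ∫ ω, Y ω ∂μ := by
  rw [← integral_indicator_one hA, ← integral_condExp hm]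
  exact integral_congr_ae hY

lemma integrable_comp_of_ae_mem_finset {Ω : Type*} {m0 : MeasurableSpace Ω} {μ : Measure Ω}
    [IsFiniteMeasure μ] {X : Ω → ℤ} (hX : Measurable X) {s : Finset ℤ}
    (hs : ∀ᵐ ω ∂μ, X ω ∈ s) (g : ℤ → ℝ) :
    Integrable (fun ω => g (X ω)) μ := by
  refine .of_bound ((measurable_of_countable g).comp hX).aestronglyMeasurable
    (∑ x ∈ s, |g x|) ?_
  filter_upwards [hs] with ω hω
  exact Finset.single_le_sum (f := fun x => |g x|) (fun _ _ => abs_nonneg _) hω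

structure IsNearestNeighbourWalk {Ω : Type*} {m0 : MeasurableSpace Ω} (μ : Measure Ω)
    (ℱ : Filtration ℕ m0) (ξ : ℕ → Ω → ℤ) (p q : ℤ → ℝ) : Prop where
  adapted : Adapted ℱ ξ
  add_eq_one : ∀ x, p x + q x = 1
  condExp_up : ∀ n : ℕ, μ[Set.indicator {ω | ξ (n + 1) ω = ξ n ω + 1} (fun _ => (1 : ℝ)) | ℱ n]
    =ᵐ[μ] fun ω => p (ξ n ω)
  condExp_down : ∀ n : ℕ,
    μ[Set.indicator {ω | ξ (n + 1) ω = ξ n ω - 1} (fun _ => (1 : ℝ)) | ℱ n]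
      =ᵐ[μ] fun ω => q (ξ n ω)

namespace IsNearestNeighbourWalk

variable {Ω : Type*} {m0 : MeasurableSpace Ω} {μ : Measure Ω}
  {ℱ : Filtration ℕ m0} {ξ : ℕ → Ω → ℤ} {p q : ℤ → ℝ}

lemma measurable (hξ : IsNearestNeighbourWalk μ ℱ ξ p q) (n : ℕ) : Measurable (ξ n) :=
  (hξ.adapted n).mono (ℱ.le n) le_rfl

lemma measurableSet_step (hξ : IsNearestNeighbourWalk μ ℱ ξ p q) (n : ℕ) (s : ℤ → ℤ) :
    MeasurableSet {ω | ξ (n + 1) ω = s (ξ n ω)} :=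
  measurableSet_eq_fun (hξ.measurable (n + 1)) ((measurable_of_countable s).comp (hξ.measurable n))

variable [IsProbabilityMeasure μ]

lemma ae_succ_eq_add_one_or_sub_one (hξ : IsNearestNeighbourWalk μ ℱ ξ p q) (n : ℕ) :
    ∀ᵐ ω ∂μ, ξ (n + 1) ω = ξ n ω + 1 ∨ ξ (n + 1) ω = ξ n ω - 1 := by
  have hup : MeasurableSet {ω | ξ (n + 1) ω = ξ n ω + 1} := hξ.measurableSet_step n (· + 1)
  have hdown : MeasurableSet {ω | ξ (n + 1) ω = ξ n ω - 1} := hξ.measurableSet_step n (· - 1)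
  have hdisj : Disjoint {ω | ξ (n + 1) ω = ξ n ω + 1} {ω | ξ (n + 1) ω = ξ n ω - 1} :=
    Set.disjoint_left.mpr fun ω (h1 : _ = _) (h2 : _ = _) => by omega
  have hsum : μ.real {ω | ξ (n + 1) ω = ξ n ω + 1} + μ.real {ω | ξ (n + 1) ω = ξ n ω - 1} = 1 := by
    rw [measureReal_eq_integral_of_condExp_indicator (ℱ.le n) hup (hξ.condExp_up n),
      measureReal_eq_integral_of_condExp_indicator (ℱ.le n) hdown (hξ.condExp_down n),
      ← integral_add (integrable_condExp.congr (hξ.condExp_up n))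
        (integrable_condExp.congr (hξ.condExp_down n))]
    simp [hξ.add_eq_one]
  exact ae_mem_union_of_measureReal_add_eq_one hup hdown hdisj hsum

lemma ae_mem_Icc (hξ : IsNearestNeighbourWalk μ ℱ ξ p q) {z : ℤ} (h0 : ∀ ω, ξ 0 ω = z)
    (n : ℕ) : ∀ᵐ ω ∂μ, ξ n ω ∈ Finset.Icc (z - n) (z + n) := by
  induction n with
  | zero => exact ae_of_all _ fun ω => by simp [h0 ω]
  | succ n ih =>
    filter_upwards [ih, hξ.ae_succ_eq_add_one_or_sub_one n] with ω hn hstep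
    simp only [Finset.mem_Icc] at hn ⊢
    omega

lemma integrable_comp (hξ : IsNearestNeighbourWalk μ ℱ ξ p q) {z : ℤ} (h0 : ∀ ω, ξ 0 ω = z)
    (n : ℕ) (g : ℤ → ℝ) : Integrable (fun ω => g (ξ n ω)) μ :=
  integrable_comp_of_ae_mem_finset (hξ.measurable n) (hξ.ae_mem_Icc h0 n) g

lemma condExp_comp_succ (hξ : IsNearestNeighbourWalk μ ℱ ξ p q) {z : ℤ} (h0 : ∀ ω, ξ 0 ω = z)
    (n : ℕ) (g : ℤ → ℝ) :
    μ[fun ω => g (ξ (n + 1) ω) | ℱ n]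
      =ᵐ[μ] fun ω => p (ξ n ω) * g (ξ n ω + 1) + q (ξ n ω) * g (ξ n ω - 1) := by
  set up : Ω → ℝ := Set.indicator {ω | ξ (n + 1) ω = ξ n ω + 1} fun _ => 1
  set down : Ω → ℝ := Set.indicator {ω | ξ (n + 1) ω = ξ n ω - 1} fun _ => 1
  set gUp : Ω → ℝ := fun ω => g (ξ n ω + 1)
  set gDown : Ω → ℝ := fun ω => g (ξ n ω - 1)
  have hmeas (s : ℤ → ℤ) : StronglyMeasurable[ℱ n] fun ω => g (s (ξ n ω)) :=
    ((measurable_of_countable fun x => g (s x)).comp (hξ.adapted n)).stronglyMeasurable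
  have hint (s : ℤ → ℤ) : Integrable ((fun ω => g (s (ξ n ω))) *
      Set.indicator {ω | ξ (n + 1) ω = s (ξ n ω)} fun _ => 1) μ := by
    exact (hξ.integrable_comp h0 n (g ∘ s)).mul_bdd (c := 1)
      (stronglyMeasurable_const.indicator (hξ.measurableSet_step n s)).aestronglyMeasurable
      (ae_of_all _ fun ω => (norm_indicator_le_norm_self (fun _ => (1 : ℝ)) ω).trans_eq norm_one)
  have hsplit : (fun ω => g (ξ (n + 1) ω)) =ᵐ[μ] gUp * up + gDown * down := by
    filter_upwards [hξ.ae_succ_eq_add_one_or_sub_one n] with ω hω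
    have hne : ξ n ω + 1 ≠ ξ n ω - 1 := by omega
    rcases hω with h | h <;> simp [up, down, gUp, gDown, h, hne, hne.symm]
  calc μ[fun ω => g (ξ (n + 1) ω) | ℱ n]
      =ᵐ[μ] μ[gUp * up | ℱ n] + μ[gDown * down | ℱ n] :=
        (condExp_congr_ae hsplit).trans (condExp_add (hint (· + 1)) (hint (· - 1)) _)
    _ =ᵐ[μ] gUp * μ[up | ℱ n] + gDown * μ[down | ℱ n] :=
        (condExp_mul_of_stronglyMeasurable_left (hmeas (· + 1)) (hint (· + 1))
          ((integrable_const 1).indicator (hξ.measurableSet_step n (· + 1)))).add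
        (condExp_mul_of_stronglyMeasurable_left (hmeas (· - 1)) (hint (· - 1))
          ((integrable_const 1).indicator (hξ.measurableSet_step n (· - 1))))
    _ =ᵐ[μ] _ := by
        filter_upwards [hξ.condExp_up n, hξ.condExp_down n] with ω hup hdown
        have hup : μ[up | ℱ n] ω = p (ξ n ω) := hup
        have hdown : μ[down | ℱ n] ω = q (ξ n ω) := hdown
        simp only [Pi.add_apply, Pi.mul_apply, hup, hdown, gUp, gDown]
        ring

theorem martingale_comp_of_harmonic (hξ : IsNearestNeighbourWalk μ ℱ ξ p q) {z : ℤ}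
    (h0 : ∀ ω, ξ 0 ω = z) {g : ℤ → ℝ} (hg : ∀ x, p x * g (x + 1) + q x * g (x - 1) = g x) :
    Martingale (fun n ω => g (ξ n ω)) ℱ μ :=
  martingale_nat
    (fun n => ((measurable_of_countable g).comp (hξ.adapted n)).stronglyMeasurable)
    (fun n => hξ.integrable_comp h0 n g)
    fun n => by simpa only [hg] using (hξ.condExp_comp_succ h0 n g).symm

end IsNearestNeighbourWalk

/-- If `(ξ_n)` is the discrete-time random walk in the environment `ω` started at `z`
(adapted, with the conditional one-step transition probabilities of the RWRE), then
`(f(ξ_n))_n` is a martingale, where `f` is the Lyapunov function of the potential `V`. -/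
theorem lyap_rwre_martingale (ωm ωp : ℤ → ℝ) (hm : ∀ x, 0 < ωm x) (hp : ∀ x, 0 < ωp x)
    (a : ℤ) {Ω : Type*} {m0 : MeasurableSpace Ω} (μ : Measure Ω) [IsProbabilityMeasure μ]
    (ℱ : Filtration ℕ m0) (ξ : ℕ → Ω → ℤ) (hadapted : Adapted ℱ ξ)
    (z : ℤ) (h0 : ∀ ω', ξ 0 ω' = z)
    (hstep_up : ∀ n : ℕ,
      μ[Set.indicator {ω' | ξ (n + 1) ω' = ξ n ω' + 1} (fun _ => (1 : ℝ)) | ℱ n]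
        =ᵐ[μ] fun ω' => ωp (ξ n ω') / (ωp (ξ n ω') + ωm (ξ n ω')))
    (hstep_down : ∀ n : ℕ,
      μ[Set.indicator {ω' | ξ (n + 1) ω' = ξ n ω' - 1} (fun _ => (1 : ℝ)) | ℱ n]
        =ᵐ[μ] fun ω' => ωm (ξ n ω') / (ωp (ξ n ω') + ωm (ξ n ω'))) :
    Martingale (fun n ω' => lyap (potential ωm ωp) a (ξ n ω')) ℱ μ := by
  have hwalk : IsNearestNeighbourWalk μ ℱ ξ (fun x => ωp x / (ωp x + ωm x))
      (fun x => ωm x / (ωp x + ωm x)) :=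
    { adapted := hadapted
      add_eq_one := fun x => by rw [← add_div, div_self (add_pos (hp x) (hm x)).ne']
      condExp_up := hstep_up
      condExp_down := hstep_down }
  exact hwalk.martingale_comp_of_harmonic h0 (lyap_potential_harmonic ωm ωp hm hp a)
end
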